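/- (Spectral lower bound for Ncut) For every partition A₁,…,A_k of {1,…,n} into nonempty sets, Ncut(A₁,…,A_k) ≥ λ₁ + λ₂ + … + λ_k, where λ₁ ≤ … ≤ λ_n are the eigenvalues of the normalized graph Laplacian L_sym listed with multiplicity. -/

import Mathlib

/-!
The normalized indicator vectors `h_j = D^{1/2} 1_{A_j} / √vol(A_j)` of the parts are orthonormal,
and the Rayleigh quotient of `L_sym` at `h_j` is `cut(A_j) / vol(A_j)`. So it suffices to show
`μ_0 + ⋯ + μ_{k-1} ≤ ∑_j ⟪h_j, L h_j⟫` for any orthonormal family `h_0, …, h_{k-1}` (Ky Fan).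
Expanding in the eigenbasis, `∑_j ⟪h_j, L h_j⟫ = ∑_i μ_i t_i` with `t_i = ∑_j ⟪u_i, h_j⟫²`;
Bessel gives `t_i ≤ 1`, Parseval gives `∑_i t_i = k`, and among such weights `∑_i μ_i t_i`
is smallest when the weight sits on the `k` smallest eigenvalues.
-/

open Matrix BigOperators Finset Function

section Orthonormal

variable {ι : Type*} [Fintype ι]

theorem eq_sum_dotProduct_smul_of_orthonormal [DecidableEq ι] (u : ι → ι → ℝ)
    (hu : ∀ i j, u i ⬝ᵥ u j = if i = j then 1 else 0) (x : ι → ℝ) :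
    x = ∑ i, (u i ⬝ᵥ x) • u i := by
  have hrows : of u * (of u)ᵀ = 1 := by
    ext i j
    exact hu i j
  -- a square matrix with orthonormal rows also has orthonormal columns
  have hcols : (of u)ᵀ * of u = 1 := mul_eq_one_comm.mp hrows
  calc x = x ᵥ* ((of u)ᵀ * of u) := by rw [hcols, vecMul_one]
    _ = ∑ i, (u i ⬝ᵥ x) • u i := by
      rw [← vecMul_vecMul, vecMul_transpose, vecMul_eq_sum]
      rfl

theorem dotProduct_mulVec_eq_sum_of_orthonormal_eigenvectors [DecidableEq ι]
    (L : Matrix ι ι ℝ) (μ : ι → ℝ) (u : ι → ι → ℝ)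
    (hu : ∀ i j, u i ⬝ᵥ u j = if i = j then 1 else 0)
    (heig : ∀ i, L *ᵥ u i = μ i • u i) (x : ι → ℝ) :
    x ⬝ᵥ (L *ᵥ x) = ∑ i, μ i * (u i ⬝ᵥ x) ^ 2 := by
  nth_rewrite 2 [eq_sum_dotProduct_smul_of_orthonormal u hu x]
  rw [mulVec_sum, dotProduct_sum]
  refine sum_congr rfl fun i _ => ?_
  rw [mulVec_smul, heig, dotProduct_smul, dotProduct_smul, dotProduct_comm x, smul_eq_mul,
    smul_eq_mul]
  ring

theorem sum_sq_dotProduct_of_orthonormal [DecidableEq ι] (u : ι → ι → ℝ)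
    (hu : ∀ i j, u i ⬝ᵥ u j = if i = j then 1 else 0) (x : ι → ℝ) :
    ∑ i, (u i ⬝ᵥ x) ^ 2 = x ⬝ᵥ x := by
  simpa using (dotProduct_mulVec_eq_sum_of_orthonormal_eigenvectors 1 1 u hu (by simp) x).symm

theorem sum_sq_dotProduct_le_of_orthonormal {κ : Type*} [Fintype κ] [DecidableEq κ]
    (h : κ → ι → ℝ) (hh : ∀ j j', h j ⬝ᵥ h j' = if j = j' then 1 else 0) (x : ι → ℝ) :
    ∑ j, (x ⬝ᵥ h j) ^ 2 ≤ x ⬝ᵥ x := by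
  have hon : Orthonormal ℝ fun j => (WithLp.toLp 2 (h j) : EuclideanSpace ℝ ι) := by
    rw [orthonormal_iff_ite]
    intro j j'
    simp [EuclideanSpace.inner_eq_star_dotProduct, dotProduct_comm, hh]
  have hbessel := hon.sum_inner_products_le (WithLp.toLp 2 x : EuclideanSpace ℝ ι) (s := univ)
  rw [← real_inner_self_eq_norm_sq, EuclideanSpace.inner_eq_star_dotProduct] at hbessel
  simpa [EuclideanSpace.inner_eq_star_dotProduct] using hbessel

end Orthonormal

theorem sum_le_sum_mul_of_forall_le {ι : Type*} [Fintype ι] [DecidableEq ι] (S : Finset ι)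
    (μ t : ι → ℝ) (hμ : ∀ i ∈ S, ∀ j ∉ S, μ i ≤ μ j) (ht0 : ∀ i, 0 ≤ t i)
    (ht1 : ∀ i, t i ≤ 1) (htsum : ∑ i, t i = #S) :
    ∑ i ∈ S, μ i ≤ ∑ i, μ i * t i := by
  obtain ⟨c, hcS, hcSc⟩ : ∃ c, (∀ i ∈ S, μ i ≤ c) ∧ ∀ j ∉ S, c ≤ μ j := by
    rcases S.eq_empty_or_nonempty with rfl | hS
    · obtain ⟨c, hc⟩ := (Set.finite_range μ).bddBelow
      exact ⟨c, by simp, fun j _ => hc ⟨j, rfl⟩⟩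
    · exact ⟨S.sup' hS μ, fun i hi => le_sup' μ hi,
        fun j hj => sup'_le hS μ fun i hi => hμ i hi j hj⟩
  -- the mass `1 - t i` missing inside `S` sits at `t j` outside `S`, where `μ` is larger
  have hin : ∑ i ∈ S, μ i ≤ ∑ i ∈ S, (μ i * t i + c * (1 - t i)) :=
    sum_le_sum fun i hi => by nlinarith [hcS i hi, ht1 i]
  have hout : ∑ i ∈ Sᶜ, c * t i ≤ ∑ i ∈ Sᶜ, μ i * t i :=
    sum_le_sum fun i hi => mul_le_mul_of_nonneg_right (hcSc i (mem_compl.mp hi)) (ht0 i)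
  have hmass : (#S : ℝ) - ∑ i ∈ S, t i = ∑ i ∈ Sᶜ, t i := by
    linarith [sum_add_sum_compl S t]
  simp only [sum_add_distrib, ← mul_sum, sum_sub_distrib, sum_const, nsmul_eq_mul, mul_one,
    hmass] at hin hout
  linarith [sum_add_sum_compl S (fun i => μ i * t i)]

theorem sum_castLE_le_sum_mul_of_monotone {n k : ℕ} (hkn : k ≤ n) (μ : Fin n → ℝ)
    (hμ : Monotone μ) (t : Fin n → ℝ) (ht0 : ∀ i, 0 ≤ t i) (ht1 : ∀ i, t i ≤ 1)
    (htsum : ∑ i, t i = k) :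
    ∑ i : Fin k, μ (Fin.castLE hkn i) ≤ ∑ i, μ i * t i := by
  set S := univ.map (Fin.castLEEmb hkn)
  have hS : ∀ i, i ∈ S ↔ (i : ℕ) < k := fun i => by
    simp [S, ← Set.mem_range, Fin.range_castLE]
  rw [show ∑ i : Fin k, μ (Fin.castLE hkn i) = ∑ i ∈ S, μ i from
    (sum_map univ (Fin.castLEEmb hkn) μ).symm]
  refine sum_le_sum_mul_of_forall_le S μ t (fun i hi j hj => hμ ?_) ht0 ht1
    (by simpa [S] using htsum)
  rw [hS] at hi hj
  exact Fin.le_def.mpr (by omega)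

theorem sum_castLE_eigenvalues_le_sum_dotProduct_mulVec {n k : ℕ} (hkn : k ≤ n)
    (L : Matrix (Fin n) (Fin n) ℝ) (μ : Fin n → ℝ) (hμ : Monotone μ) (u : Fin n → Fin n → ℝ)
    (hu : ∀ i j, u i ⬝ᵥ u j = if i = j then 1 else 0) (heig : ∀ i, L *ᵥ u i = μ i • u i)
    (h : Fin k → Fin n → ℝ) (hh : ∀ j j', h j ⬝ᵥ h j' = if j = j' then 1 else 0) :
    ∑ i : Fin k, μ (Fin.castLE hkn i) ≤ ∑ j, h j ⬝ᵥ (L *ᵥ h j) := by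
  set t : Fin n → ℝ := fun i => ∑ j, (u i ⬝ᵥ h j) ^ 2
  have ht1 : ∀ i, t i ≤ 1 := fun i => by
    simpa [hu] using sum_sq_dotProduct_le_of_orthonormal h hh (u i)
  have htsum : ∑ i, t i = k := by
    rw [sum_comm]
    simp [sum_sq_dotProduct_of_orthonormal u hu, hh]
  calc ∑ i : Fin k, μ (Fin.castLE hkn i)
      ≤ ∑ i, μ i * t i :=
        sum_castLE_le_sum_mul_of_monotone hkn μ hμ t (fun i => by positivity) ht1 htsum
    _ = ∑ j, h j ⬝ᵥ (L *ᵥ h j) := by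
        simp only [t, mul_sum, dotProduct_mulVec_eq_sum_of_orthonormal_eigenvectors L μ u hu heig]
        exact sum_comm

section NormalizedIndicator

variable {ι : Type*} [Fintype ι] [DecidableEq ι]

noncomputable def normalizedIndicator (d : ι → ℝ) (A : Finset ι) : ι → ℝ :=
  fun i => if i ∈ A then √(d i) / √(∑ l ∈ A, d l) else 0

theorem normalizedIndicator_dotProduct_self {d : ι → ℝ} {A : Finset ι}
    (hd : ∀ i ∈ A, 0 < d i) (hA : A.Nonempty) :
    normalizedIndicator d A ⬝ᵥ normalizedIndicator d A = 1 := by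
  have hvol : 0 < ∑ i ∈ A, d i := sum_pos hd hA
  have hsq : ∀ i, normalizedIndicator d A i * normalizedIndicator d A i =
      if i ∈ A then d i / ∑ l ∈ A, d l else 0 := fun i => by
    unfold normalizedIndicator
    split_ifs with hi
    · rw [div_mul_div_comm, Real.mul_self_sqrt (hd i hi).le, Real.mul_self_sqrt hvol.le]
    · rw [mul_zero]
  rw [dotProduct, sum_congr rfl fun i _ => hsq i, sum_ite_mem, univ_inter, ← sum_div,
    div_self hvol.ne']

theorem normalizedIndicator_dotProduct_of_disjoint (d : ι → ℝ) {A B : Finset ι}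
    (hAB : Disjoint A B) :
    normalizedIndicator d A ⬝ᵥ normalizedIndicator d B = 0 := by
  refine sum_eq_zero fun i _ => ?_
  by_cases hi : i ∈ A
  · simp [normalizedIndicator, hi, disjoint_left.mp hAB hi]
  · simp [normalizedIndicator, hi]

theorem normalizedIndicator_dotProduct_normalizedIndicator {κ : Type*} [DecidableEq κ]
    {d : ι → ℝ} (hd : ∀ i, 0 < d i) {A : κ → Finset ι} (hA : ∀ j, (A j).Nonempty)
    (hdisj : Pairwise (Disjoint on A)) (j j' : κ) :
    normalizedIndicator d (A j) ⬝ᵥ normalizedIndicator d (A j') = if j = j' then 1 else 0 := by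
  split_ifs with hjj
  · rw [hjj]
    exact normalizedIndicator_dotProduct_self (fun i _ => hd i) (hA j')
  · exact normalizedIndicator_dotProduct_of_disjoint d (hdisj hjj)

theorem diagonal_inv_sqrt_mulVec_normalizedIndicator {d : ι → ℝ} {A : Finset ι}
    (hd : ∀ i ∈ A, 0 < d i) :
    diagonal (fun i => (√(d i))⁻¹) *ᵥ normalizedIndicator d A =
      (√(∑ l ∈ A, d l))⁻¹ • fun i => if i ∈ A then 1 else 0 := by
  ext i
  by_cases hi : i ∈ A
  · have hsqrt : 0 < √(d i) := Real.sqrt_pos.mpr (hd i hi)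
    simp only [mulVec_diagonal, normalizedIndicator, hi, ↓reduceIte, Pi.smul_apply, smul_eq_mul,
      mul_one]
    field_simp
  · simp [mulVec_diagonal, normalizedIndicator, hi]

theorem indicator_dotProduct_mulVec_indicator (W : Matrix ι ι ℝ) (A : Finset ι) :
    (fun i => if i ∈ A then 1 else 0) ⬝ᵥ (W *ᵥ fun i => if i ∈ A then 1 else 0) =
      ∑ i ∈ A, ∑ l ∈ A, W i l := by
  simp [dotProduct, mulVec, ite_mul, sum_ite_mem]

theorem normalizedIndicator_dotProduct_normalizedLaplacian_mulVec (W : Matrix ι ι ℝ)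
    {d : ι → ℝ} {A : Finset ι} (hdW : ∀ i ∈ A, d i = ∑ j, W i j) (hd : ∀ i ∈ A, 0 < d i)
    (hA : A.Nonempty) :
    normalizedIndicator d A ⬝ᵥ
        ((1 - diagonal (fun i => (√(d i))⁻¹) * W * diagonal (fun i => (√(d i))⁻¹)) *ᵥ
          normalizedIndicator d A) =
      (∑ i ∈ A, ∑ l ∈ Aᶜ, W i l) / ∑ i ∈ A, d i := by
  set D := diagonal fun i => (√(d i))⁻¹
  set h := normalizedIndicator d A
  have hvol : 0 < ∑ i ∈ A, d i := sum_pos hd hA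
  have hassoc : h ⬝ᵥ ((D * W * D) *ᵥ h) = (∑ i ∈ A, ∑ l ∈ A, W i l) / ∑ i ∈ A, d i := by
    have hDh : h ᵥ* D = D *ᵥ h := by rw [← vecMul_transpose, diagonal_transpose]
    rw [← mulVec_mulVec, ← mulVec_mulVec, dotProduct_mulVec, hDh,
      diagonal_inv_sqrt_mulVec_normalizedIndicator hd, mulVec_smul, smul_dotProduct,
      dotProduct_smul, indicator_dotProduct_mulVec_indicator, smul_eq_mul, smul_eq_mul,
      ← mul_assoc, ← mul_inv, Real.mul_self_sqrt hvol.le, inv_mul_eq_div]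
  have hvol_split : ∑ i ∈ A, d i = ∑ i ∈ A, ∑ l ∈ A, W i l + ∑ i ∈ A, ∑ l ∈ Aᶜ, W i l := by
    rw [← sum_add_distrib]
    exact sum_congr rfl fun i hi => by rw [hdW i hi, sum_add_sum_compl]
  rw [sub_mulVec, one_mulVec, dotProduct_sub, normalizedIndicator_dotProduct_self hd hA, hassoc,
    eq_div_iff hvol.ne', sub_mul, div_mul_cancel₀ _ hvol.ne']
  linarith

end NormalizedIndicator

theorem ncut_spectral_lower_bound_general
    (n k : ℕ) (hkn : k ≤ n) (W : Matrix (Fin n) (Fin n) ℝ)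
    (d : Fin n → ℝ) (hd : ∀ i, d i = ∑ j, W i j) (hdpos : ∀ i, 0 < d i)
    (Lsym : Matrix (Fin n) (Fin n) ℝ)
    (hLdef : Lsym = 1 -
      Matrix.diagonal (fun i => (Real.sqrt (d i))⁻¹) * W *
        Matrix.diagonal (fun i => (Real.sqrt (d i))⁻¹))
    (μ : Fin n → ℝ) (hmono : Monotone μ)
    (u : Fin n → (Fin n → ℝ))
    (horth : ∀ i j, u i ⬝ᵥ u j = if i = j then (1 : ℝ) else 0)
    (heig : ∀ i, Lsym *ᵥ u i = μ i • u i)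
    (A : Fin k → Finset (Fin n))
    (hne : ∀ j, (A j).Nonempty)
    (hdisj : ∀ j j', j ≠ j' → Disjoint (A j) (A j')) :
    ∑ i : Fin k, μ (Fin.castLE hkn i) ≤
      ∑ j : Fin k, (∑ i ∈ A j, ∑ l ∈ (A j)ᶜ, W i l) / (∑ i ∈ A j, d i) := by
  calc ∑ i : Fin k, μ (Fin.castLE hkn i)
      ≤ ∑ j, normalizedIndicator d (A j) ⬝ᵥ (Lsym *ᵥ normalizedIndicator d (A j)) :=
        sum_castLE_eigenvalues_le_sum_dotProduct_mulVec hkn Lsym μ hmono u horth heig _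
          (normalizedIndicator_dotProduct_normalizedIndicator hdpos hne fun _ _ => hdisj _ _)
    _ = ∑ j, (∑ i ∈ A j, ∑ l ∈ (A j)ᶜ, W i l) / (∑ i ∈ A j, d i) := by
        refine sum_congr rfl fun j _ => ?_
        rw [hLdef]
        exact normalizedIndicator_dotProduct_normalizedLaplacian_mulVec W (fun i _ => hd i)
          (fun i _ => hdpos i) (hne j)

/-- **Spectral lower bound for Ncut.**
For every partition `A 0, …, A (k-1)` of `{1,…,n}` into nonempty sets,
`Ncut (A 0, …, A (k-1)) = ∑ j, cut (A j) / vol (A j) ≥ μ 0 + ⋯ + μ (k-1)`, where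
`μ 0 ≤ … ≤ μ (n-1)` are the eigenvalues of the normalized graph Laplacian `L_sym`
listed with multiplicity (witnessed by an orthonormal eigenbasis `u`). -/
theorem ncut_spectral_lower_bound
    (n k : ℕ) (hkn : k ≤ n) (W : Matrix (Fin n) (Fin n) ℝ)
    (hWsymm : W.IsSymm) (hWnn : ∀ i j, 0 ≤ W i j)
    (d : Fin n → ℝ) (hd : ∀ i, d i = ∑ j, W i j) (hdpos : ∀ i, 0 < d i)
    (Lsym : Matrix (Fin n) (Fin n) ℝ)
    (hLdef : Lsym = 1 -
      Matrix.diagonal (fun i => (Real.sqrt (d i))⁻¹) * W *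
        Matrix.diagonal (fun i => (Real.sqrt (d i))⁻¹))
    (μ : Fin n → ℝ) (hmono : Monotone μ)
    (u : Fin n → (Fin n → ℝ))
    (horth : ∀ i j, u i ⬝ᵥ u j = if i = j then (1 : ℝ) else 0)
    (heig : ∀ i, Lsym *ᵥ u i = μ i • u i)
    (A : Fin k → Finset (Fin n))
    (hne : ∀ j, (A j).Nonempty)
    (hdisj : ∀ j j', j ≠ j' → Disjoint (A j) (A j'))
    (hcover : ∀ i : Fin n, ∃ j, i ∈ A j) :
    ∑ i : Fin k, μ (Fin.castLE hkn i) ≤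
      ∑ j : Fin k, (∑ i ∈ A j, ∑ l ∈ (A j)ᶜ, W i l) / (∑ i ∈ A j, d i) :=
  ncut_spectral_lower_bound_general n k hkn W d hd hdpos Lsym hLdef μ hmono u horth heig A hne hdisj
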